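/- Let r ≥ 0 be an integer, t_min > 0, β > 0 with β·(r+1) > 1, and 0 ≤ φ < 1. Let X_1, ..., X_{r+1} be independent Pareto(t_min, β) random variables. Then E[ max( t_min, (1 − φ)·min(X_1, ..., X_{r+1}) ) ] = t_min + t_min·(1 − φ)^{β·(r+1)}/(β·(r+1) − 1). -/

import Mathlib

/-!
Tails of independent variables multiply, so the minimum of `r + 1` independent
Pareto(`tmin`, `β`) variables is Pareto(`tmin`, `β (r + 1)`), and scaling by `1 - φ` makes it
Pareto(`(1 - φ) tmin`, `β (r + 1)`). Flooring at `tmin ≥ (1 - φ) tmin` turns the tail into `1`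
below `tmin` while keeping the Pareto tail above it, so the layer-cake formula gives
`tmin + ∫_{tmin}^∞ ((1 - φ) tmin / t) ^ (β (r + 1)) dt`.
-/

open MeasureTheory ProbabilityTheory Set

/-- A real random variable `X` is Pareto(`tmin`, `β`): `P(X > t) = (tmin/t)^β` for `t ≥ tmin`
and `P(X > t) = 1` for `t < tmin`. -/
def IsPareto {Ω : Type*} [MeasurableSpace Ω] (μ : Measure Ω) (X : Ω → ℝ)
    (tmin β : ℝ) : Prop :=
  Measurable X ∧
    (∀ t : ℝ, tmin ≤ t → μ {ω | t < X ω} = ENNReal.ofReal ((tmin / t) ^ β)) ∧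
    (∀ t : ℝ, t < tmin → μ {ω | t < X ω} = 1)

theorem lt_ciInf_iff_of_finite {ι α : Type*} [Finite ι] [Nonempty ι]
    [ConditionallyCompleteLinearOrder α] {f : ι → α} {a : α} :
    a < ⨅ i, f i ↔ ∀ i, a < f i := by
  refine ⟨fun h i => h.trans_le (ciInf_le (Finite.bddBelow_range f) i), fun h => ?_⟩
  obtain ⟨i, hi⟩ := exists_eq_ciInf_of_finite (f := f)
  exact hi ▸ h i

theorem div_rpow_eqOn_Ioi {s a B : ℝ} (hs : 0 ≤ s) (ha : 0 ≤ a) :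
    EqOn (fun t : ℝ => s ^ B * t ^ (-B)) (fun t => (s / t) ^ B) (Ioi a) := fun t ht => by
  have ht0 : 0 ≤ t := ha.trans (le_of_lt ht)
  dsimp only
  rw [Real.div_rpow hs ht0, Real.rpow_neg ht0, div_eq_mul_inv]

theorem integrableOn_Ioi_div_rpow {s a B : ℝ} (hs : 0 ≤ s) (ha : 0 < a) (hB : 1 < B) :
    IntegrableOn (fun t => (s / t) ^ B) (Ioi a) :=
  IntegrableOn.congr_fun ((integrableOn_Ioi_rpow_of_lt (a := -B) (by linarith) ha).const_mul _)
    (div_rpow_eqOn_Ioi hs ha.le) measurableSet_Ioi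

theorem integral_Ioi_div_rpow {s a B : ℝ} (hs : 0 ≤ s) (ha : 0 < a) (hB : 1 < B) :
    ∫ t in Ioi a, (s / t) ^ B = s ^ B * a ^ (1 - B) / (B - 1) := by
  rw [← setIntegral_congr_fun measurableSet_Ioi (div_rpow_eqOn_Ioi hs ha.le), integral_const_mul,
    integral_Ioi_rpow_of_lt (by linarith) ha, show -B + 1 = -(B - 1) by ring, neg_div_neg_eq,
    neg_sub, mul_div_assoc]

theorem integral_eq_add_integral_measureReal_lt {Ω : Type*} [MeasurableSpace Ω]
    {μ : Measure Ω} [IsProbabilityMeasure μ] {Z : Ω → ℝ} {f : ℝ → ℝ} {a : ℝ}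
    (hZ : Measurable Z) (ha : 0 < a) (haZ : ∀ ω, a ≤ Z ω) (hf : IntegrableOn f (Ioi a))
    (htail : ∀ t ∈ Ioi a, μ.real {ω | t < Z ω} = f t) :
    ∫ ω, Z ω ∂μ = a + ∫ t in Ioi a, f t := by
  have hf0 : 0 ≤ᵐ[volume.restrict (Ioi a)] f :=
    ae_restrict_of_forall_mem measurableSet_Ioi fun t ht => htail t ht ▸ measureReal_nonneg
  have hbelow : ∫⁻ t in Ioc 0 a, μ {ω | t < Z ω} = ENNReal.ofReal a := by
    rw [setLIntegral_congr Ioo_ae_eq_Ioc.symm, setLIntegral_congr_fun (g := fun _ => 1)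
      measurableSet_Ioo fun t ht => by
        rw [show {ω | t < Z ω} = univ from eq_univ_of_forall fun ω => ht.2.trans_le (haZ ω),
          measure_univ]]
    simp
  have habove : ∫⁻ t in Ioi a, μ {ω | t < Z ω} = ENNReal.ofReal (∫ t in Ioi a, f t) := by
    rw [ofReal_integral_eq_lintegral_ofReal hf hf0]
    exact setLIntegral_congr_fun measurableSet_Ioi fun t ht => by
      rw [← htail t ht, ofReal_measureReal]
  have hZ0 : 0 ≤ᵐ[μ] Z := ae_of_all _ fun ω => ha.le.trans (haZ ω)
  rw [integral_eq_lintegral_of_nonneg_ae hZ0 hZ.aestronglyMeasurable,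
    lintegral_eq_lintegral_meas_lt μ hZ0 hZ.aemeasurable, ← Ioc_union_Ioi_eq_Ioi ha.le,
    lintegral_union measurableSet_Ioi (Ioc_disjoint_Ioi le_rfl), hbelow, habove,
    ENNReal.toReal_add ENNReal.ofReal_ne_top ENNReal.ofReal_ne_top,
    ENNReal.toReal_ofReal ha.le, ENNReal.toReal_ofReal (integral_nonneg_of_ae hf0)]

namespace ProbabilityTheory

variable {Ω ι : Type*} [MeasurableSpace Ω] {μ : Measure Ω}

theorem iIndepFun.measure_lt_ciInf [Fintype ι] [Nonempty ι] {X : ι → Ω → ℝ}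
    (hindep : iIndepFun X μ) (t : ℝ) :
    μ {ω | t < ⨅ i, X i ω} = ∏ i, μ {ω | t < X i ω} := by
  simp_rw [lt_ciInf_iff_of_finite, ofPred_forall]
  exact hindep.meas_iInter fun _ => ⟨Ioi t, measurableSet_Ioi, rfl⟩

theorem iIndepFun.isPareto_ciInf [Fintype ι] [Nonempty ι] {X : ι → Ω → ℝ} {tmin β : ℝ}
    (hindep : iIndepFun X μ) (hX : ∀ i, IsPareto μ (X i) tmin β) (htmin : 0 ≤ tmin) :
    IsPareto μ (fun ω => ⨅ i, X i ω) tmin (β * Fintype.card ι) := by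
  refine ⟨Measurable.iInf fun i => (hX i).1, fun t ht => ?_, fun t ht => ?_⟩
  · have hbase : 0 ≤ tmin / t := div_nonneg htmin (htmin.trans ht)
    rw [hindep.measure_lt_ciInf, Finset.prod_congr rfl fun i _ => (hX i).2.1 t ht,
      Finset.prod_const, Finset.card_univ, ← ENNReal.ofReal_pow (by positivity),
      Real.rpow_mul hbase, Real.rpow_natCast]
  · rw [hindep.measure_lt_ciInf, Finset.prod_congr rfl fun i _ => (hX i).2.2 t ht,
      Finset.prod_const_one]

end ProbabilityTheory

namespace IsPareto

variable {Ω : Type*} [MeasurableSpace Ω] {μ : Measure Ω} {X : Ω → ℝ}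

theorem const_mul {tmin β c : ℝ} (hX : IsPareto μ X tmin β) (hc : 0 < c) :
    IsPareto μ (fun ω => c * X ω) (c * tmin) β := by
  have hset : ∀ t, {ω | t < c * X ω} = {ω | t / c < X ω} := fun t => by
    ext ω; simp only [mem_ofPred_eq, div_lt_iff₀' hc]
  refine ⟨hX.1.const_mul c, fun t ht => ?_, fun t ht => ?_⟩
  · rw [hset, hX.2.1 _ ((le_div_iff₀' hc).2 ht), div_div_eq_mul_div, mul_comm tmin]
  · rw [hset, hX.2.2 _ ((div_lt_iff₀' hc).2 ht)]

theorem measureReal_lt_max {s β a : ℝ} (hX : IsPareto μ X s β)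
    (hs : 0 ≤ s) (hsa : s ≤ a) {t : ℝ} (ht : a < t) :
    μ.real {ω | t < max a (X ω)} = (s / t) ^ β := by
  have hset : {ω | t < max a (X ω)} = {ω | t < X ω} := by
    ext ω; simp [ht.not_gt]
  rw [measureReal_def, hset, hX.2.1 t (hsa.trans ht.le),
    ENNReal.toReal_ofReal (by have := hs.trans_lt (hsa.trans_lt ht); positivity)]

theorem integral_max [IsProbabilityMeasure μ] {s B a : ℝ} (hX : IsPareto μ X s B) (hs : 0 < s)
    (hsa : s ≤ a) (hB : 1 < B) :
    ∫ ω, max a (X ω) ∂μ = a + s ^ B * a ^ (1 - B) / (B - 1) := by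
  have ha : 0 < a := hs.trans_le hsa
  rw [integral_eq_add_integral_measureReal_lt (measurable_const.max hX.1) ha
    (fun _ => le_max_left _ _) (integrableOn_Ioi_div_rpow hs.le ha hB)
    fun t ht => hX.measureReal_lt_max hs.le hsa ht,
    integral_Ioi_div_rpow hs.le ha hB]

end IsPareto

theorem expected_min_resume_general
    {Ω : Type*} [MeasurableSpace Ω] (μ : Measure Ω) [IsProbabilityMeasure μ]
    (r : ℕ) (tmin β φ : ℝ)
    (htmin : 0 < tmin) (hβr : 1 < β * (r + 1 : ℝ))
    (hφ0 : 0 ≤ φ) (hφ1 : φ < 1)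
    (X : Fin (r + 1) → Ω → ℝ)
    (hindep : iIndepFun X μ)
    (hX : ∀ k, IsPareto μ (X k) tmin β) :
    ∫ ω, max tmin ((1 - φ) * ⨅ k, X k ω) ∂μ
      = tmin + tmin * (1 - φ) ^ (β * (r + 1 : ℝ)) / (β * (r + 1 : ℝ) - 1) := by
  have hmin : IsPareto μ (fun ω => ⨅ k, X k ω) tmin (β * (r + 1 : ℝ)) := by
    simpa using hindep.isPareto_ciInf hX htmin.le
  have hscaled := hmin.const_mul (sub_pos.2 hφ1)
  rw [hscaled.integral_max (by have := sub_pos.2 hφ1; positivity)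
      (mul_le_of_le_one_left htmin.le (by linarith)) hβr,
    Real.mul_rpow (by linarith) htmin.le, mul_assoc, ← Real.rpow_add htmin, add_sub_cancel,
    Real.rpow_one, mul_comm]

/-- Eq. (resume8) in the paper's Theorem 6: for `r+1` independent
Pareto(`tmin`, `β`) attempts, each scaled by the remaining fraction `1 − φ` and floored
at `tmin`, the expected time of the fastest attempt is
`tmin + tmin·(1−φ)^{β(r+1)}/(β(r+1) − 1)`. -/
theorem expected_min_resume
    {Ω : Type*} [MeasurableSpace Ω] (μ : Measure Ω) [IsProbabilityMeasure μ]
    (r : ℕ) (tmin β φ : ℝ)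
    (htmin : 0 < tmin) (hβ : 0 < β) (hβr : 1 < β * (r + 1 : ℝ))
    (hφ0 : 0 ≤ φ) (hφ1 : φ < 1)
    (X : Fin (r + 1) → Ω → ℝ)
    (hindep : iIndepFun X μ)
    (hX : ∀ k, IsPareto μ (X k) tmin β) :
    ∫ ω, max tmin ((1 - φ) * ⨅ k, X k ω) ∂μ
      = tmin + tmin * (1 - φ) ^ (β * (r + 1 : ℝ)) / (β * (r + 1 : ℝ) - 1) :=
  expected_min_resume_general μ r tmin β φ htmin hβr hφ0 hφ1 X hindep hX
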